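/- (Lemma 3.1.) If E[V − τ] < 0, then the stationary equation Y ∘ θ = ψ(Y, ·) P-a.s. possesses a P-a.s. finite nonnegative measurable solution, unique up to P-a.s. equality, and this solution is given by M_∞ = max( 0, sup_{j≥1} ( σ∘θ^{-j} + D∘θ^{-j} + Σ_{i=1}^{j} V∘θ^{-i} − Σ_{i=1}^{j} τ∘θ^{-i} ) ). -/

import Mathlib

/-!
Write `g = V - τ`. Up to the term `(σ + D) ∘ θ⁻ʲ`, the `S_j` form the backward random walk with
increments `g ∘ θ⁻ⁱ`; telescoping `σ + D` into the increments turns `S_j` into `σ + D` plus a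
Birkhoff sum of `θ⁻¹` whose integrand still has integral `E[g] < 0`. By Hopf's maximal inequality
and ergodicity such a walk is a.s. bounded above, so `M_∞ < ∞` a.s., and the recursion
`M_{n+1} ∘ θ = ψ(M_n, ·)` passes to the limit because `ψ` is continuous in `y`.
A nonnegative solution `Y'` dominates every `M_n`, hence `M_∞`; the difference `Y' - M_∞` is
nonincreasing along `θ`, hence invariant, hence an a.s. constant `c`. If `c > 0` the equation
forces `M_∞ ∘ θ - M_∞ = g`, but an integrable coboundary `u ∘ θ - u` of a real-valued `u` has
integral zero, contradicting `E[g] < 0`.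
-/

open MeasureTheory Filter

noncomputable section

variable {Ω : Type*}

/-- ψ(y, ω) = max( max( y + V ω, σ ω + D ω + V ω ) − τ ω, 0 ). -/
def psi (σ D V τ : Ω → ℝ) (y : ℝ) (ω : Ω) : ℝ :=
  max (max (y + V ω) (σ ω + D ω + V ω) - τ ω) 0

/-- S_j(ω) = σ(θ^{-j}ω) + D(θ^{-j}ω) + Σ_{i=1}^{j} V(θ^{-i}ω) − Σ_{i=1}^{j} τ(θ^{-i}ω),
where `θi` denotes the inverse of `θ`. -/
def Sj (θi : Ω → Ω) (σ D V τ : Ω → ℝ) (j : ℕ) (ω : Ω) : ℝ :=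
  σ (θi^[j] ω) + D (θi^[j] ω)
    + ∑ i ∈ Finset.Icc 1 j, V (θi^[i] ω)
    - ∑ i ∈ Finset.Icc 1 j, τ (θi^[i] ω)

/-- Loynes sequence: M_0 = 0 and M_n = max(0, max_{1 ≤ j ≤ n} S_j). -/
def Mn (θi : Ω → Ω) (σ D V τ : Ω → ℝ) (n : ℕ) (ω : Ω) : ℝ :=
  (Finset.Icc 1 n).fold max 0 (fun j => Sj θi σ D V τ j ω)

/-- M_∞ = max(0, sup_{j ≥ 1} S_j) ∈ [0,∞]. -/
def Minf (θi : Ω → Ω) (σ D V τ : Ω → ℝ) (ω : Ω) : EReal :=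
  max 0 (⨆ j : ℕ, ((Sj θi σ D V τ (j + 1) ω : ℝ) : EReal))

open Set Topology

section BirkhoffSum

variable {α : Type*} (f : α → α) (g : α → ℝ)

def birkhoffMax : ℕ → α → ℝ
  | 0 => 0
  | n + 1 => fun x => max (birkhoffMax n x) (birkhoffSum f g (n + 1) x)

variable {f g}

lemma birkhoffMax_nonneg (n : ℕ) (x : α) : 0 ≤ birkhoffMax f g n x := by
  induction n with
  | zero => rfl
  | succ n ih => exact ih.trans (le_max_left _ _)

lemma birkhoffMax_le_succ (n : ℕ) (x : α) : birkhoffMax f g n x ≤ birkhoffMax f g (n + 1) x :=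
  le_max_left _ _

lemma birkhoffSum_le_birkhoffMax {k n : ℕ} (hkn : k ≤ n) (x : α) :
    birkhoffSum f g k x ≤ birkhoffMax f g n x := by
  induction n with
  | zero => simp [Nat.le_zero.1 hkn, birkhoffMax]
  | succ n ih =>
    rcases hkn.eq_or_lt with rfl | hlt
    · exact le_max_right _ _
    · exact (ih (Nat.lt_succ_iff.1 hlt)).trans (birkhoffMax_le_succ n x)

lemma birkhoffMax_succ_le (n : ℕ) (x : α) :
    birkhoffMax f g (n + 1) x ≤ max 0 (g x + birkhoffMax f g n (f x)) := by
  induction n with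
  | zero => simp [birkhoffMax]
  | succ n ih =>
    refine max_le (ih.trans (max_le_max le_rfl ?_)) ?_
    · gcongr
      exact birkhoffMax_le_succ n (f x)
    · rw [birkhoffSum_succ']
      exact le_max_of_le_right (by gcongr; exact birkhoffSum_le_birkhoffMax le_rfl _)

lemma birkhoffMax_sub_comp_le_indicator (n : ℕ) (x : α) :
    birkhoffMax f g (n + 1) x - birkhoffMax f g (n + 1) (f x)
      ≤ {y | 0 < birkhoffMax f g (n + 1) y}.indicator g x := by
  by_cases hx : 0 < birkhoffMax f g (n + 1) x
  · rw [indicator_of_mem (s := {y | 0 < birkhoffMax f g (n + 1) y}) hx]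
    have h := birkhoffMax_succ_le (f := f) (g := g) n x
    rw [max_eq_right (by by_contra! h'; linarith [max_eq_left h'.le])] at h
    linarith [birkhoffMax_le_succ (f := f) (g := g) n (f x)]
  · rw [indicator_of_notMem (s := {y | 0 < birkhoffMax f g (n + 1) y}) hx]
    linarith [not_lt.1 hx, birkhoffMax_nonneg (f := f) (g := g) (n + 1) (f x)]

lemma bddAbove_range_birkhoffSum_apply_iff (x : α) :
    BddAbove (range fun n => birkhoffSum f g n (f x)) ↔
      BddAbove (range fun n => birkhoffSum f g n x) := by
  simp only [bddAbove_def, forall_mem_range]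
  constructor
  · rintro ⟨C, hC⟩
    refine ⟨max 0 (g x + C), fun n => ?_⟩
    cases n with
    | zero => simp
    | succ n =>
      exact (birkhoffSum_succ' f g n x).trans_le (le_max_of_le_right (by gcongr; exact hC n))
  · rintro ⟨C, hC⟩
    exact ⟨C - g x, fun n => by linarith [hC (n + 1), birkhoffSum_succ' f g n x]⟩

lemma birkhoffSum_comp_sub (f : α → α) (h : α → ℝ) (n : ℕ) (x : α) :
    birkhoffSum f (h ∘ f - h) n x = h (f^[n] x) - h x := by
  induction n with
  | zero => simp
  | succ n ih =>
    rw [birkhoffSum_succ, ih, Pi.sub_apply, Function.comp_apply,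
      ← Function.iterate_succ_apply' f n x]
    ring

end BirkhoffSum

section Ergodic

variable {α : Type*} [MeasurableSpace α] {μ : Measure α} {f : α → α} {g : α → ℝ}

lemma Measurable.birkhoffSum (hg : Measurable g) (hf : Measurable f) (n : ℕ) :
    Measurable (birkhoffSum f g n) :=
  Finset.measurable_sum _ fun i _ => hg.comp (hf.iterate i)

lemma Measurable.birkhoffMax (hg : Measurable g) (hf : Measurable f) (n : ℕ) :
    Measurable (birkhoffMax f g n) := by
  induction n with
  | zero => exact measurable_const
  | succ n ih => exact ih.max (hg.birkhoffSum hf (n + 1))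

namespace MeasureTheory.MeasurePreserving

lemma integrable_birkhoffSum (hf : MeasurePreserving f μ μ) (hg : Integrable g μ) (n : ℕ) :
    Integrable (birkhoffSum f g n) μ :=
  integrable_finsetSum _ fun i _ => (hf.iterate i).integrable_comp_of_integrable hg

lemma integrable_birkhoffMax (hf : MeasurePreserving f μ μ) (hg : Integrable g μ) (n : ℕ) :
    Integrable (birkhoffMax f g n) μ := by
  induction n with
  | zero => exact integrable_zero _ _ _
  | succ n ih => exact ih.sup (hf.integrable_birkhoffSum hg (n + 1))

lemma integral_comp_eq {u : α → ℝ} (hf : MeasurePreserving f μ μ)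
    (hu : AEStronglyMeasurable u μ) :
    ∫ x, u (f x) ∂μ = ∫ x, u x ∂μ := by
  rw [← hf.map_eq] at hu
  rw [← integral_map hf.aemeasurable hu, hf.map_eq]

/-- Hopf's maximal inequality. -/
lemma setIntegral_birkhoffMax_pos_nonneg (hf : MeasurePreserving f μ μ) (hgm : Measurable g)
    (hg : Integrable g μ) (n : ℕ) :
    0 ≤ ∫ x in {x | 0 < birkhoffMax f g (n + 1) x}, g x ∂μ := by
  have hA : MeasurableSet {x | 0 < birkhoffMax f g (n + 1) x} :=
    measurableSet_lt measurable_const (hgm.birkhoffMax hf.measurable _)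
  have hM := hf.integrable_birkhoffMax hg (n + 1)
  have hMf : Integrable (fun x => birkhoffMax f g (n + 1) (f x)) μ :=
    hf.integrable_comp_of_integrable hM
  calc 0 = ∫ x, birkhoffMax f g (n + 1) x - birkhoffMax f g (n + 1) (f x) ∂μ := by
        rw [integral_sub hM hMf, hf.integral_comp_eq hM.aestronglyMeasurable, sub_self]
    _ ≤ ∫ x, {x | 0 < birkhoffMax f g (n + 1) x}.indicator g x ∂μ :=
        integral_mono (hM.sub hMf) (hg.indicator hA) (birkhoffMax_sub_comp_le_indicator n)
    _ = _ := integral_indicator hA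

lemma integral_nonneg_of_ae_exists_birkhoffSum_pos (hf : MeasurePreserving f μ μ)
    (hgm : Measurable g) (hg : Integrable g μ) (h : ∀ᵐ x ∂μ, ∃ n, 0 < birkhoffSum f g n x) :
    0 ≤ ∫ x, g x ∂μ := by
  set A : ℕ → Set α := fun n => {x | 0 < birkhoffMax f g (n + 1) x}
  have hAm : Monotone A := monotone_nat_of_le_succ fun n x hx =>
    lt_of_lt_of_le hx (birkhoffMax_le_succ (n + 1) x)
  have hAuniv : (⋃ n, A n) =ᵐ[μ] (univ : Set α) := eventuallyEq_univ.2 <|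
    h.mono fun x ⟨n, hn⟩ => mem_iUnion.2
      ⟨n, hn.trans_le (birkhoffSum_le_birkhoffMax n.le_succ x)⟩
  have := tendsto_setIntegral_of_monotone (μ := μ) (f := g)
    (fun n => measurableSet_lt measurable_const (hgm.birkhoffMax hf.measurable _)) hAm
    hg.integrableOn
  rw [setIntegral_congr_set hAuniv, setIntegral_univ] at this
  exact ge_of_tendsto this (.of_forall fun n => hf.setIntegral_birkhoffMax_pos_nonneg hgm hg n)

lemma ae_comp_eq_of_ae_comp_le [IsFiniteMeasure μ]
    (hf : MeasurePreserving f μ μ) {u : α → ℝ} (hu : Measurable u)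
    (h : ∀ᵐ x ∂μ, u (f x) ≤ u x) : ∀ᵐ x ∂μ, u (f x) = u x := by
  -- `arctan ∘ u` is bounded, hence integrable, and still sub-invariant.
  have ha : Integrable (fun x => Real.arctan (u x)) μ :=
    .of_bound (Real.continuous_arctan.measurable.comp hu).aestronglyMeasurable (Real.pi / 2)
      (.of_forall fun x => (abs_lt.2 (Real.arctan_mem_Ioo (u x))).le)
  have haf : Integrable (fun x => Real.arctan (u (f x))) μ :=
    hf.integrable_comp_of_integrable ha
  have hzero : ∫ x, Real.arctan (u x) - Real.arctan (u (f x)) ∂μ = 0 := by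
    rw [integral_sub ha haf, hf.integral_comp_eq ha.aestronglyMeasurable, sub_self]
  have hnn : 0 ≤ᵐ[μ] fun x => Real.arctan (u x) - Real.arctan (u (f x)) :=
    h.mono fun x hx => sub_nonneg.2 (Real.arctan_mono hx)
  filter_upwards [(integral_eq_zero_iff_of_nonneg_ae hnn (ha.sub haf)).1 hzero] with x hx
  exact Real.arctan_injective (sub_eq_zero.1 hx).symm

lemma integral_eq_zero_of_ae_comp_eq_add [IsFiniteMeasure μ]
    (hf : MeasurePreserving f μ μ) {u : α → ℝ} (hu : Measurable u) (hg : Integrable g μ)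
    (h : ∀ᵐ x ∂μ, u (f x) = u x + g x) : ∫ x, g x ∂μ = 0 := by
  -- Truncate `u` at levels `±K`; the truncated coboundaries have integral zero and converge
  -- to `g` under the domination `|g|`.
  set c : ℕ → ℝ → ℝ := fun K y => max (min y K) (-K)
  have hc_meas : ∀ K, Measurable (c K) := fun K =>
    (measurable_id.min measurable_const).max measurable_const
  have hc_int : ∀ K, Integrable (fun x => c K (u x)) μ := fun K =>
    .of_bound ((hc_meas K).comp hu).aestronglyMeasurable K (.of_forall fun x => by
      rw [Real.norm_eq_abs, abs_le]
      exact ⟨le_max_right _ _, max_le (min_le_right _ _) (by simp)⟩)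
  have hc_lip : ∀ K a b, |c K a - c K b| ≤ |a - b| := fun K a b =>
    (abs_max_sub_max_le_abs _ _ _).trans ((abs_min_sub_min_le_max _ _ _ _).trans (by simp))
  have hc_eq : ∀ y, ∀ᶠ K : ℕ in atTop, c K y = y := fun y => by
    filter_upwards [eventually_ge_atTop ⌈|y|⌉₊] with K hK
    have hy : |y| ≤ K := (Nat.le_ceil _).trans (by exact_mod_cast hK)
    rw [abs_le] at hy
    simp only [c, min_eq_left hy.2, max_eq_left hy.1]
  have hcf_int : ∀ K, Integrable (fun x => c K (u (f x))) μ := fun K =>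
    hf.integrable_comp_of_integrable (hc_int K)
  have hF : ∀ K, ∫ x, c K (u (f x)) - c K (u x) ∂μ = 0 := fun K => by
    rw [integral_sub (hcf_int K) (hc_int K),
      hf.integral_comp_eq (hc_int K).aestronglyMeasurable, sub_self]
  have hlim := tendsto_integral_of_dominated_convergence
    (F := fun K x => c K (u (f x)) - c K (u x)) (f := g) (fun x => |g x|)
    (fun K => ((hcf_int K).sub (hc_int K)).aestronglyMeasurable)
    hg.abs (fun K => h.mono fun x hx => by
      rw [Real.norm_eq_abs]
      exact (hc_lip K _ _).trans_eq (by rw [hx, add_sub_cancel_left]))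
    (h.mono fun x hx => tendsto_const_nhds.congr' <| ((hc_eq (u (f x))).and (hc_eq (u x))).mono
      fun K hK => by dsimp only; rw [hK.1, hK.2, hx, add_sub_cancel_left])
  simp only [hF] at hlim
  exact tendsto_nhds_unique hlim tendsto_const_nhds

end MeasureTheory.MeasurePreserving

lemma MeasurableEquiv.ae_of_ae_comp {β : Type*} [MeasurableSpace β] {ν : Measure β}
    (e : α ≃ᵐ β) (he : MeasurePreserving e μ ν) {p : β → Prop} (h : ∀ᵐ x ∂μ, p (e x)) :
    ∀ᵐ y ∂ν, p y := by
  rw [← he.map_eq]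
  exact e.measurableEmbedding.ae_map_iff.2 h

theorem Ergodic.ae_bddAbove_birkhoffSum (hf : Ergodic f μ) (hgm : Measurable g)
    (hg : Integrable g μ) (hneg : ∫ x, g x ∂μ < 0) :
    ∀ᵐ x ∂μ, BddAbove (range fun n => birkhoffSum f g n x) := by
  have hinv : f ⁻¹' {x | BddAbove (range fun n => birkhoffSum f g n x)} =
      {x | BddAbove (range fun n => birkhoffSum f g n x)} :=
    ext bddAbove_range_birkhoffSum_apply_iff
  refine (hf.ae_mem_or_ae_notMem
    (measurableSet_bddAbove_range fun n => hgm.birkhoffSum hf.measurable n) hinv).resolve_right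
    fun hunb => hneg.not_ge ?_
  refine hf.integral_nonneg_of_ae_exists_birkhoffSum_pos hgm hg (hunb.mono fun x hx => ?_)
  obtain ⟨_, ⟨n, rfl⟩, hn⟩ := not_bddAbove_iff.1 hx 0
  exact ⟨n, hn⟩

theorem Ergodic.ae_bddAbove_comp_iterate_add_birkhoffSum (hf : Ergodic f μ) {h : α → ℝ}
    (hhm : Measurable h) (hh : Integrable h μ) (hgm : Measurable g) (hg : Integrable g μ)
    (hneg : ∫ x, g x ∂μ < 0) :
    ∀ᵐ x ∂μ, BddAbove (range fun n => h (f^[n] x) + birkhoffSum f g n x) := by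
  have hhf : Integrable (h ∘ f) μ := hf.integrable_comp_of_integrable hh
  have hq : ∫ x, (h ∘ f - h + g) x ∂μ = ∫ x, g x ∂μ := by
    rw [integral_add' (hhf.sub hh) hg, integral_sub' hhf hh]
    simp only [Function.comp_apply]
    rw [hf.integral_comp_eq hh.aestronglyMeasurable, sub_self, zero_add]
  filter_upwards [hf.ae_bddAbove_birkhoffSum (((hhm.comp hf.measurable).sub hhm).add hgm)
    ((hhf.sub hh).add hg) (hq ▸ hneg)] with x ⟨C, hC⟩
  refine ⟨C + h x, forall_mem_range.2 fun n => ?_⟩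
  have hn := hC (mem_range_self n)
  rw [birkhoffSum_add', birkhoffSum_comp_sub] at hn
  linarith

end Ergodic

section Loynes

variable {σ D V τ : Ω → ℝ}

lemma psi_eq_max (y : ℝ) (ω : Ω) :
    psi σ D V τ y ω = max (y + (V ω - τ ω)) (max (σ ω + D ω + V ω - τ ω) 0) := by
  rw [psi, ← max_sub_sub_right, max_assoc, add_sub_assoc]

lemma monotone_psi (ω : Ω) : Monotone (psi σ D V τ · ω) := fun y y' h => by
  simp only [psi_eq_max]
  gcongr

lemma continuous_psi (ω : Ω) : Continuous (psi σ D V τ · ω) := by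
  unfold psi
  fun_prop

lemma psi_add_le {w : ℝ} (hw : 0 ≤ w) (y : ℝ) (ω : Ω) :
    psi σ D V τ (y + w) ω ≤ psi σ D V τ y ω + w := by
  rw [psi_eq_max, psi_eq_max]
  have h₁ := le_max_left (y + (V ω - τ ω)) (max (σ ω + D ω + V ω - τ ω) 0)
  have h₂ := le_max_right (y + (V ω - τ ω)) (max (σ ω + D ω + V ω - τ ω) 0)
  exact max_le (by linarith) (by linarith)

lemma psi_eq_add_of_psi_add_eq {c y : ℝ} {ω : Ω} (hc : 0 < c)
    (h : psi σ D V τ (y + c) ω = psi σ D V τ y ω + c) :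
    psi σ D V τ y ω = y + (V ω - τ ω) := by
  simp only [psi_eq_max] at h ⊢
  refine max_eq_left (not_lt.1 fun hlt => ?_)
  rw [max_eq_right hlt.le] at h
  have : max (y + c + (V ω - τ ω)) (max (σ ω + D ω + V ω - τ ω) 0) <
      max (σ ω + D ω + V ω - τ ω) 0 + c := max_lt (by linarith) (by linarith)
  exact this.ne h

variable {θi T : Ω → Ω}

lemma Sj_eq_add_birkhoffSum (j : ℕ) (ω : Ω) :
    Sj θi σ D V τ j ω = σ (θi^[j] ω) + D (θi^[j] ω) + birkhoffSum θi ((V - τ) ∘ θi) j ω := by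
  rw [Sj, add_sub_assoc, ← Finset.sum_sub_distrib, ← Finset.Ico_add_one_right_eq_Icc,
    Finset.sum_Ico_eq_sum_range, Nat.add_sub_cancel]
  simp [birkhoffSum, add_comm 1, Function.iterate_succ_apply']

lemma Sj_zero (ω : Ω) : Sj θi σ D V τ 0 ω = σ ω + D ω := by
  simp [Sj]

lemma Sj_succ_apply (hθ : Function.LeftInverse θi T) (j : ℕ) (ω : Ω) :
    Sj θi σ D V τ (j + 1) (T ω) = Sj θi σ D V τ j ω + (V ω - τ ω) := by
  simp only [Sj_eq_add_birkhoffSum, birkhoffSum_succ', Function.iterate_succ_apply,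
    Function.comp_apply, Pi.sub_apply, hθ ω]
  ring

lemma Mn_zero (ω : Ω) : Mn θi σ D V τ 0 ω = 0 := by
  simp [Mn]

lemma Mn_succ (n : ℕ) (ω : Ω) :
    Mn θi σ D V τ (n + 1) ω = max (Sj θi σ D V τ (n + 1) ω) (Mn θi σ D V τ n ω) := by
  rw [Mn, ← Finset.insert_Icc_right_eq_Icc_add_one (by omega), Finset.fold_insert (by simp), Mn]

lemma monotone_Mn (ω : Ω) : Monotone (Mn θi σ D V τ · ω) :=
  monotone_nat_of_le_succ fun n => (Mn_succ n ω).symm ▸ le_max_right _ _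

lemma Mn_succ_apply (hσ0 : ∀ ω, 0 ≤ σ ω) (hD0 : ∀ ω, 0 ≤ D ω) (hθ : Function.LeftInverse θi T)
    (n : ℕ) (ω : Ω) :
    Mn θi σ D V τ (n + 1) (T ω) = psi σ D V τ (Mn θi σ D V τ n ω) ω := by
  induction n with
  | zero =>
    rw [Mn_succ, Mn_zero, Mn_zero, Sj_succ_apply hθ, Sj_zero, psi_eq_max, zero_add]
    have := hσ0 ω; have := hD0 ω
    rw [max_eq_right (le_max_of_le_left (by linarith)), add_sub_assoc]
  | succ n ih =>
    have hb : max (σ ω + D ω + V ω - τ ω) 0 ≤ psi σ D V τ (Mn θi σ D V τ n ω) ω := by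
      rw [psi_eq_max]
      exact le_max_right _ _
    rw [Mn_succ, ih, Sj_succ_apply hθ, Mn_succ, (monotone_psi ω).map_max,
      psi_eq_max (Sj θi σ D V τ (n + 1) ω), max_assoc, max_eq_right hb]

lemma Minf_eq_iSup_Mn (ω : Ω) : Minf θi σ D V τ ω = ⨆ n, (Mn θi σ D V τ n ω : EReal) := by
  refine le_antisymm (max_le ?_ (iSup_le fun j => ?_)) (iSup_le fun n => ?_)
  · exact le_iSup_of_le 0 (by simp [Mn_zero])
  · exact le_iSup_of_le (j + 1) (EReal.coe_le_coe_iff.2 ((Mn_succ j ω).symm ▸ le_max_left _ _))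
  · induction n with
    | zero => simp [Mn_zero, Minf]
    | succ n ih =>
      rw [Mn_succ, EReal.coe_strictMono.monotone.map_max]
      exact max_le (le_max_of_le_right (le_iSup (fun j => (Sj θi σ D V τ (j + 1) ω : EReal)) n)) ih

lemma tendsto_Mn_toReal_Minf {ω : Ω} (h : Minf θi σ D V τ ω ≠ ⊤) :
    Tendsto (Mn θi σ D V τ · ω) atTop (𝓝 (Minf θi σ D V τ ω).toReal) := by
  have hbot : Minf θi σ D V τ ω ≠ ⊥ := ne_bot_of_le_ne_bot EReal.zero_ne_bot (le_max_left _ _)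
  rw [← EReal.tendsto_coe, EReal.coe_toReal h hbot, Minf_eq_iSup_Mn]
  exact tendsto_atTop_iSup fun m n hmn => EReal.coe_le_coe_iff.2 (monotone_Mn ω hmn)

end Loynes

section LoynesMeasure

variable [MeasurableSpace Ω] {P : Measure Ω} {σ D V τ : Ω → ℝ} {θ : Ω ≃ᵐ Ω}

lemma measurable_Minf {θi : Ω → Ω} (hθi : Measurable θi) (hσm : Measurable σ)
    (hDm : Measurable D) (hVm : Measurable V) (hτm : Measurable τ) :
    Measurable (Minf θi σ D V τ) := by
  have := hθi.iterate
  have hS : ∀ j, Measurable (Sj θi σ D V τ j) := fun j => by unfold Sj; fun_prop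
  exact measurable_const.max (.iSup fun j => (hS (j + 1)).coe_real_ereal)

theorem ae_Minf_ne_top (hθ : Ergodic θ P) (hσm : Measurable σ) (hDm : Measurable D)
    (hVm : Measurable V) (hτm : Measurable τ) (hσi : Integrable σ P) (hDi : Integrable D P)
    (hVi : Integrable V P) (hτi : Integrable τ P) (hneg : ∫ ω, V ω - τ ω ∂P < 0) :
    ∀ᵐ ω ∂P, Minf θ.symm σ D V τ ω ≠ ⊤ := by
  have hθ' := hθ.symm
  have hint : ∫ ω, ((V - τ) ∘ θ.symm) ω ∂P = ∫ ω, V ω - τ ω ∂P :=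
    hθ'.toMeasurePreserving.integral_comp' (V - τ)
  filter_upwards [hθ'.ae_bddAbove_comp_iterate_add_birkhoffSum (hσm.add hDm) (hσi.add hDi)
    ((hVm.sub hτm).comp θ.symm.measurable)
    (hθ'.toMeasurePreserving.integrable_comp_of_integrable (hVi.sub hτi)) (hint ▸ hneg)]
    with ω ⟨C, hC⟩
  refine ne_top_of_le_ne_top (EReal.coe_ne_top (max 0 C)) ?_
  rw [EReal.coe_strictMono.monotone.map_max, EReal.coe_zero]
  refine max_le_max le_rfl (iSup_le fun j => EReal.coe_le_coe_iff.2 ?_)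
  rw [Sj_eq_add_birkhoffSum]
  exact hC (mem_range_self (j + 1))


theorem ae_toReal_Minf_apply_eq_psi (hθ : MeasurePreserving θ P P) (hσ0 : ∀ ω, 0 ≤ σ ω)
    (hD0 : ∀ ω, 0 ≤ D ω) (hfin : ∀ᵐ ω ∂P, Minf θ.symm σ D V τ ω ≠ ⊤) :
    ∀ᵐ ω ∂P, (Minf θ.symm σ D V τ (θ ω)).toReal =
      psi σ D V τ (Minf θ.symm σ D V τ ω).toReal ω := by
  filter_upwards [hfin, hθ.quasiMeasurePreserving.ae hfin] with ω hω hθω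
  have hlim := (tendsto_Mn_toReal_Minf hθω).comp (tendsto_add_atTop_nat 1)
  simp only [Function.comp_def, Mn_succ_apply hσ0 hD0 θ.symm_apply_apply] at hlim
  exact tendsto_nhds_unique hlim ((continuous_psi ω).tendsto _ |>.comp (tendsto_Mn_toReal_Minf hω))

theorem ae_toReal_Minf_le_of_psi_le (hθ : MeasurePreserving θ P P) (hσ0 : ∀ ω, 0 ≤ σ ω)
    (hD0 : ∀ ω, 0 ≤ D ω) (hfin : ∀ᵐ ω ∂P, Minf θ.symm σ D V τ ω ≠ ⊤) {Z : Ω → ℝ}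
    (hZ0 : ∀ ω, 0 ≤ Z ω) (hZ : ∀ᵐ ω ∂P, psi σ D V τ (Z ω) ω ≤ Z (θ ω)) :
    ∀ᵐ ω ∂P, (Minf θ.symm σ D V τ ω).toReal ≤ Z ω := by
  have hMn : ∀ n, ∀ᵐ ω ∂P, Mn θ.symm σ D V τ n ω ≤ Z ω := by
    intro n
    induction n with
    | zero => exact .of_forall fun ω => (Mn_zero ω).trans_le (hZ0 ω)
    | succ n ih =>
      refine θ.ae_of_ae_comp hθ ?_
      filter_upwards [ih, hZ] with ω h₁ h₂
      rw [Mn_succ_apply hσ0 hD0 θ.symm_apply_apply]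
      exact (monotone_psi ω h₁).trans h₂
  filter_upwards [hfin, ae_all_iff.2 hMn] with ω hω hle
  exact le_of_tendsto' (tendsto_Mn_toReal_Minf hω) hle

theorem ae_eq_of_ae_le_of_psi_solutions [IsFiniteMeasure P] (hθ : Ergodic θ P)
    (hV : Integrable V P) (hτ : Integrable τ P) (hneg : ∫ ω, V ω - τ ω ∂P < 0)
    {Y Z : Ω → ℝ} (hYm : Measurable Y) (hZm : Measurable Z)
    (hY : ∀ᵐ ω ∂P, Y (θ ω) = psi σ D V τ (Y ω) ω) (hZ : ∀ᵐ ω ∂P, Z (θ ω) = psi σ D V τ (Z ω) ω)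
    (hYZ : ∀ᵐ ω ∂P, Y ω ≤ Z ω) : Z =ᵐ[P] Y := by
  have hdec : ∀ᵐ ω ∂P, Z (θ ω) - Y (θ ω) ≤ Z ω - Y ω := by
    filter_upwards [hY, hZ, hYZ] with ω hYω hZω hle
    have := psi_add_le (σ := σ) (D := D) (V := V) (τ := τ) (sub_nonneg.2 hle) (Y ω) ω
    rw [add_sub_cancel] at this
    linarith
  obtain ⟨c, hc⟩ := hθ.ae_eq_const_of_ae_eq_comp₀ (hZm.sub hYm).nullMeasurable
    (hθ.toMeasurePreserving.ae_comp_eq_of_ae_comp_le (hZm.sub hYm) hdec)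
  rcases le_or_gt c 0 with hc0 | hc0
  · filter_upwards [hc, hYZ] with ω hω hle
    have : Z ω - Y ω = c := hω
    linarith
  refine absurd ?_ hneg.ne
  refine hθ.toMeasurePreserving.integral_eq_zero_of_ae_comp_eq_add hYm (hV.sub hτ) ?_
  filter_upwards [hY, hZ, hc, hθ.toMeasurePreserving.quasiMeasurePreserving.ae hc]
    with ω hYω hZω hcω hcθω
  have hZc : Z ω = Y ω + c := by have : Z ω - Y ω = c := hcω; linarith
  have hZcθ : Z (θ ω) = Y (θ ω) + c := by have : Z (θ ω) - Y (θ ω) = c := hcθω; linarith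
  rw [hYω, psi_eq_add_of_psi_add_eq hc0 (by rw [← hZc, ← hZω, hZcθ, hYω])]

end LoynesMeasure

theorem loynes_existence_uniqueness_general
    [MeasurableSpace Ω] (P : Measure Ω) [IsProbabilityMeasure P]
    (θ : Ω ≃ᵐ Ω) (herg : Ergodic (⇑θ) P)
    (σ D V τ : Ω → ℝ)
    (hσm : Measurable σ) (hDm : Measurable D) (hVm : Measurable V) (hτm : Measurable τ)
    (hσ0 : ∀ ω, 0 ≤ σ ω) (hD0 : ∀ ω, 0 ≤ D ω)
    (hσi : Integrable σ P) (hDi : Integrable D P) (hVi : Integrable V P) (hτi : Integrable τ P)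
    (hEV : ∫ ω, (V ω - τ ω) ∂P < 0) :
    ∃ Y : Ω → ℝ, Measurable Y ∧ (∀ ω, 0 ≤ Y ω) ∧
      (∀ᵐ ω ∂P, Y (θ ω) = psi σ D V τ (Y ω) ω) ∧
      (∀ᵐ ω ∂P, ((Y ω : ℝ) : EReal) = Minf (⇑θ.symm) σ D V τ ω) ∧
      (∀ Yp : Ω → ℝ, Measurable Yp → (∀ ω, 0 ≤ Yp ω) →
        (∀ᵐ ω ∂P, Yp (θ ω) = psi σ D V τ (Yp ω) ω) → Yp =ᵐ[P] Y) := by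
  have hθ := herg.toMeasurePreserving
  have hfin := ae_Minf_ne_top herg hσm hDm hVm hτm hσi hDi hVi hτi hEV
  have hYm := (measurable_Minf θ.symm.measurable hσm hDm hVm hτm).ereal_toReal
  have hY := ae_toReal_Minf_apply_eq_psi hθ hσ0 hD0 hfin
  refine ⟨_, hYm, fun ω => EReal.toReal_nonneg (le_max_left _ _), hY, ?_,
    fun Yp hYpm hYp0 hYp => ?_⟩
  · filter_upwards [hfin] with ω hω
    exact EReal.coe_toReal hω (ne_bot_of_le_ne_bot EReal.zero_ne_bot (le_max_left _ _))
  · exact ae_eq_of_ae_le_of_psi_solutions herg hVi hτi hEV hYm hYpm hY hYp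
      (ae_toReal_Minf_le_of_psi_le hθ hσ0 hD0 hfin hYp0 (hYp.mono fun ω h => h.ge))

/-- Lemma 3.1: if E[V − τ] < 0, the stationary equation Y ∘ θ = ψ(Y, ·)
has a P-a.s. finite nonnegative solution, unique up to P-a.s. equality, given by M_∞. -/
theorem loynes_existence_uniqueness
    [MeasurableSpace Ω] (P : Measure Ω) [IsProbabilityMeasure P]
    (θ : Ω ≃ᵐ Ω) (herg : Ergodic (⇑θ) P)
    (σ D V τ : Ω → ℝ)
    (hσm : Measurable σ) (hDm : Measurable D) (hVm : Measurable V) (hτm : Measurable τ)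
    (hσ0 : ∀ ω, 0 ≤ σ ω) (hD0 : ∀ ω, 0 ≤ D ω) (hV0 : ∀ ω, 0 ≤ V ω) (hτ0 : ∀ ω, 0 ≤ τ ω)
    (hσi : Integrable σ P) (hDi : Integrable D P) (hVi : Integrable V P) (hτi : Integrable τ P)
    (hτpos : ∀ᵐ ω ∂P, 0 < τ ω)
    (hEV : ∫ ω, (V ω - τ ω) ∂P < 0) :
    ∃ Y : Ω → ℝ, Measurable Y ∧ (∀ ω, 0 ≤ Y ω) ∧
      (∀ᵐ ω ∂P, Y (θ ω) = psi σ D V τ (Y ω) ω) ∧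
      (∀ᵐ ω ∂P, ((Y ω : ℝ) : EReal) = Minf (⇑θ.symm) σ D V τ ω) ∧
      (∀ Yp : Ω → ℝ, Measurable Yp → (∀ ω, 0 ≤ Yp ω) →
        (∀ᵐ ω ∂P, Yp (θ ω) = psi σ D V τ (Yp ω) ω) → Yp =ᵐ[P] Y) :=
  loynes_existence_uniqueness_general P θ herg σ D V τ hσm hDm hVm hτm hσ0 hD0 hσi hDi hVi hτi hEV
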